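/- arXiv:2310.19604 — 3 statements merged into one kernel-verified Lean document; each statement's English description precedes it below -/
import Mathlib

section
/- Let V(x₁, x₂, s) = (1/δ₁)·log(x₁) − ((λ+α₂)/(δ₂(λ+α₁)))·log(x₂). Then along any solution of the predator-prey system x₁' = δ₁((s−λ)/(s+α₁))x₁, x₂' = δ₂((s−λ)/(s+α₂))x₂, s' = s(1−s) − s·x₁/(s+α₁) − s·x₂/(s+α₂) with x₁, x₂, s > 0, the time derivative of V equals (α₁−α₂)(s−λ)² / ((λ+α₁)(s+α₁)(s+α₂)). -/
/-! Along a solution of `x' = g x` with `x > 0` one has `(log x)' = g`, so the derivative of `V`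
is the rational function `(s - λ) / (s + α₁) - (λ + α₂) (s - λ) / ((λ + α₁) (s + α₂))` of `s`
alone; bringing it to a common denominator gives the claimed formula. -/

theorem HasDerivAt.log_of_hasDerivAt_mul_self {x : ℝ → ℝ} {g t : ℝ}
    (hx : HasDerivAt x (g * x t) t) (hxt : x t ≠ 0) :
    HasDerivAt (fun t => Real.log (x t)) g t := by
  simpa [hxt] using hx.log hxt

theorem predatorPrey_lyapunov_rate_eq {δ₁ δ₂ α₁ α₂ lam s : ℝ} (hδ₁ : δ₁ ≠ 0) (hδ₂ : δ₂ ≠ 0)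
    (hs₁ : s + α₁ ≠ 0) (hs₂ : s + α₂ ≠ 0) (hlam : lam + α₁ ≠ 0) :
    1 / δ₁ * (δ₁ * ((s - lam) / (s + α₁)))
        - (lam + α₂) / (δ₂ * (lam + α₁)) * (δ₂ * ((s - lam) / (s + α₂)))
      = (α₁ - α₂) * (s - lam) ^ 2 / ((lam + α₁) * (s + α₁) * (s + α₂)) := by
  field_simp
  ring

theorem stmt_4_general (δ₁ δ₂ α₁ α₂ lam : ℝ)
    (hδ₁ : 0 < δ₁) (hδ₂ : 0 < δ₂) (hα₁ : 0 < α₁) (hα₂ : 0 < α₂) (hlam : 0 < lam)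
    (x₁ x₂ s : ℝ → ℝ)
    (hpos : ∀ t, 0 < x₁ t ∧ 0 < x₂ t ∧ 0 < s t)
    (hx₁ : ∀ t, HasDerivAt x₁ (δ₁ * ((s t - lam) / (s t + α₁)) * x₁ t) t)
    (hx₂ : ∀ t, HasDerivAt x₂ (δ₂ * ((s t - lam) / (s t + α₂)) * x₂ t) t) :
    ∀ t, HasDerivAt
      (fun t => (1 / δ₁) * Real.log (x₁ t) - ((lam + α₂) / (δ₂ * (lam + α₁))) * Real.log (x₂ t))
      ((α₁ - α₂) * (s t - lam)^2 / ((lam + α₁) * (s t + α₁) * (s t + α₂))) t := by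
  intro t
  obtain ⟨hx₁t, hx₂t, hst⟩ := hpos t
  have hlog₁ := (hx₁ t).log_of_hasDerivAt_mul_self hx₁t.ne'
  have hlog₂ := (hx₂ t).log_of_hasDerivAt_mul_self hx₂t.ne'
  rw [← predatorPrey_lyapunov_rate_eq hδ₁.ne' hδ₂.ne' (by positivity) (by positivity)
    (by positivity)]
  exact (hlog₁.const_mul _).sub (hlog₂.const_mul _)

theorem stmt_4 (δ₁ δ₂ α₁ α₂ lam : ℝ)
    (hδ₁ : 0 < δ₁) (hδ₂ : 0 < δ₂) (hα₁ : 0 < α₁) (hα₂ : 0 < α₂) (hlam : 0 < lam)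
    (x₁ x₂ s : ℝ → ℝ)
    (hpos : ∀ t, 0 < x₁ t ∧ 0 < x₂ t ∧ 0 < s t)
    (hx₁ : ∀ t, HasDerivAt x₁ (δ₁ * ((s t - lam) / (s t + α₁)) * x₁ t) t)
    (hx₂ : ∀ t, HasDerivAt x₂ (δ₂ * ((s t - lam) / (s t + α₂)) * x₂ t) t)
    (hs : ∀ t, HasDerivAt s
      (s t * (1 - s t) - s t / (s t + α₁) * x₁ t - s t / (s t + α₂) * x₂ t) t) :
    ∀ t, HasDerivAt
      (fun t => (1 / δ₁) * Real.log (x₁ t) - ((lam + α₂) / (δ₂ * (lam + α₁))) * Real.log (x₂ t))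
      ((α₁ - α₂) * (s t - lam)^2 / ((lam + α₁) * (s t + α₁) * (s t + α₂))) t :=
  stmt_4_general δ₁ δ₂ α₁ α₂ lam hδ₁ hδ₂ hα₁ hα₂ hlam x₁ x₂ s hpos hx₁ hx₂
end

section
/- Along any positive solution of the predator-prey system with λ₁ = λ₂ = λ and α₁ < α₂, the function V(x₁, x₂, s) = (1/δ₁)log(x₁) − ((λ+α₂)/(δ₂(λ+α₁)))log(x₂) is nonincreasing in time; i.e., its time derivative is ≤ 0 everywhere on the positive octant. -/
/-!
Since `xᵢ'/xᵢ = δᵢ (s - λ)/(s + αᵢ)`, `V'` is a weighted difference of two rates vanishing at the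
same point `s = λ`. The weight `(λ + α₂)/(λ + α₁)` also matches their slopes there, so the
difference has a double zero at `λ`: `V' = (α₁ - α₂)(s - λ)² / ((λ + α₁)(s + α₁)(s + α₂)) ≤ 0`.
-/

open Real

theorem hasDerivAt_log_of_hasDerivAt_mul_self {x : ℝ → ℝ} {g t : ℝ} (hx : HasDerivAt x (g * x t) t)
    (hx₀ : x t ≠ 0) : HasDerivAt (fun t => log (x t)) g t := by
  simpa only [mul_div_assoc, div_self hx₀, mul_one] using hx.log hx₀

/-- `dV/dt` along the flow, with `δ₁` and `δ₂` cancelled. -/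
noncomputable def lyapunovRate (lam α₁ α₂ s : ℝ) : ℝ :=
  (s - lam) / (s + α₁) - (lam + α₂) / (lam + α₁) * ((s - lam) / (s + α₂))

theorem lyapunovRate_eq {lam α₁ α₂ s : ℝ} (hl : lam + α₁ ≠ 0) (hs₁ : s + α₁ ≠ 0)
    (hs₂ : s + α₂ ≠ 0) :
    lyapunovRate lam α₁ α₂ s
      = (α₁ - α₂) * (s - lam) ^ 2 / ((lam + α₁) * (s + α₁) * (s + α₂)) := by
  unfold lyapunovRate
  field_simp
  ring

theorem lyapunovRate_nonpos {lam α₁ α₂ s : ℝ} (hl : 0 < lam + α₁) (hs : 0 < s + α₁)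
    (hα : α₁ ≤ α₂) : lyapunovRate lam α₁ α₂ s ≤ 0 := by
  have hs₂ : 0 < s + α₂ := by linarith
  rw [lyapunovRate_eq hl.ne' hs.ne' hs₂.ne']
  apply div_nonpos_of_nonpos_of_nonneg
  · exact mul_nonpos_of_nonpos_of_nonneg (by linarith) (sq_nonneg _)
  · positivity

theorem stmt_5_general (δ₁ δ₂ α₁ α₂ lam : ℝ)
    (hδ₁ : 0 < δ₁) (hδ₂ : 0 < δ₂) (hα : 0 < α₁) (hαα : α₁ < α₂) (hlam : 0 < lam)
    (x₁ x₂ s : ℝ → ℝ)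
    (hpos : ∀ t, 0 < x₁ t ∧ 0 < x₂ t ∧ 0 < s t)
    (hx₁ : ∀ t, HasDerivAt x₁ (δ₁ * ((s t - lam) / (s t + α₁)) * x₁ t) t)
    (hx₂ : ∀ t, HasDerivAt x₂ (δ₂ * ((s t - lam) / (s t + α₂)) * x₂ t) t) :
    ∀ t, deriv
      (fun t => (1 / δ₁) * Real.log (x₁ t) - ((lam + α₂) / (δ₂ * (lam + α₁))) * Real.log (x₂ t))
      t ≤ 0 := by
  intro t
  obtain ⟨hx₁₀, hx₂₀, hs₀⟩ := hpos t
  have hV : HasDerivAt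
      (fun t => (1 / δ₁) * log (x₁ t) - ((lam + α₂) / (δ₂ * (lam + α₁))) * log (x₂ t))
      (lyapunovRate lam α₁ α₂ (s t)) t := by
    refine (((hasDerivAt_log_of_hasDerivAt_mul_self (hx₁ t) hx₁₀.ne').const_mul (1 / δ₁)).sub
      ((hasDerivAt_log_of_hasDerivAt_mul_self (hx₂ t) hx₂₀.ne').const_mul
        ((lam + α₂) / (δ₂ * (lam + α₁))))).congr_deriv ?_
    unfold lyapunovRate
    field_simp
  rw [hV.deriv]
  exact lyapunovRate_nonpos (by linarith) (by linarith) hαα.le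

theorem stmt_5 (δ₁ δ₂ α₁ α₂ lam : ℝ)
    (hδ₁ : 0 < δ₁) (hδ₂ : 0 < δ₂) (hα : 0 < α₁) (hαα : α₁ < α₂) (hlam : 0 < lam)
    (x₁ x₂ s : ℝ → ℝ)
    (hpos : ∀ t, 0 < x₁ t ∧ 0 < x₂ t ∧ 0 < s t)
    (hx₁ : ∀ t, HasDerivAt x₁ (δ₁ * ((s t - lam) / (s t + α₁)) * x₁ t) t)
    (hx₂ : ∀ t, HasDerivAt x₂ (δ₂ * ((s t - lam) / (s t + α₂)) * x₂ t) t)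
    (hs : ∀ t, HasDerivAt s
      (s t * (1 - s t) - s t / (s t + α₁) * x₁ t - s t / (s t + α₂) * x₂ t) t) :
    ∀ t, deriv
      (fun t => (1 / δ₁) * Real.log (x₁ t) - ((lam + α₂) / (δ₂ * (lam + α₁))) * Real.log (x₂ t))
      t ≤ 0 :=
  stmt_5_general δ₁ δ₂ α₁ α₂ lam hδ₁ hδ₂ hα hαα hlam x₁ x₂ s hpos hx₁ hx₂
end

section
/- Define H₂(λ, α₁, α₂) = λ − 2α₁ + 8λα₁ − λα₂ + 2α₁α₂ + 2α₁². If 0 < λ < 1/2, 0 < α₁ < 1−2λ, and 1−2λ < α₂ < 1, then H₂(λ, α₁, α₂) > 0. -/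
/-! `H₂` is affine in `α₂`, so on `1 - 2λ < α₂ < 1` it is a positive combination of its values
at the endpoints, `H₂(λ, α₁, 1 - 2λ) = 2(λ + α₁)²` and `H₂(λ, α₁, 1) = 2α₁(4λ + α₁)`, both
positive. -/

def H₂ (lam α₁ α₂ : ℝ) : ℝ :=
  lam - 2*α₁ + 8*lam*α₁ - lam*α₂ + 2*α₁*α₂ + 2*α₁^2

section

variable (lam α₁ α₂ : ℝ)

lemma H₂_one_sub_two_mul : H₂ lam α₁ (1 - 2*lam) = 2 * (lam + α₁)^2 := by
  unfold H₂; ring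

lemma H₂_one : H₂ lam α₁ 1 = 2 * α₁ * (4*lam + α₁) := by
  unfold H₂; ring

lemma two_mul_mul_H₂_eq :
    2*lam * H₂ lam α₁ α₂ =
      (1 - α₂) * H₂ lam α₁ (1 - 2*lam) + (α₂ - (1 - 2*lam)) * H₂ lam α₁ 1 := by
  unfold H₂; ring

variable {lam α₁ α₂}

lemma H₂_pos (hα₁ : 0 < α₁) (hα₂ : 1 - 2*lam < α₂) (hα₂' : α₂ < 1) : 0 < H₂ lam α₁ α₂ := by
  have hlam : 0 < lam := by linarith
  have h : 0 < 2*lam * H₂ lam α₁ α₂ := by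
    rw [two_mul_mul_H₂_eq, H₂_one_sub_two_mul, H₂_one]
    exact add_pos (mul_pos (by linarith) (by positivity)) (mul_pos (by linarith) (by positivity))
  exact pos_of_mul_pos_right h (by positivity)

end

theorem stmt_13_general (lam α₁ α₂ : ℝ)
    (hα₁ : 0 < α₁)
    (hα₂ : 1 - 2*lam < α₂) (hα₂' : α₂ < 1) :
    0 < lam - 2*α₁ + 8*lam*α₁ - lam*α₂ + 2*α₁*α₂ + 2*α₁^2 :=
  H₂_pos hα₁ hα₂ hα₂'

theorem stmt_13 (lam α₁ α₂ : ℝ)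
    (hlam : 0 < lam) (hlam' : lam < 1/2)
    (hα₁ : 0 < α₁) (hα₁' : α₁ < 1 - 2*lam)
    (hα₂ : 1 - 2*lam < α₂) (hα₂' : α₂ < 1) :
    0 < lam - 2*α₁ + 8*lam*α₁ - lam*α₂ + 2*α₁*α₂ + 2*α₁^2 :=
  stmt_13_general lam α₁ α₂ hα₁ hα₂ hα₂'
end
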